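/- Let G ≤ Homeo₊(S^1) contain no non-abelian free subgroup, and let f, g ∈ G with rot(f) = rot(g) = p/q ∈ ℚ/ℤ. Then f g⁻¹ has a fixed point. -/

import Mathlib

open Function Set

notation "S¹" => AddCircle (1:ℝ)

/-- The group structure on self-homeomorphisms, with `(f * g) x = f (g x)`. -/
instance homeoGroup (X : Type*) [TopologicalSpace X] : Group (X ≃ₜ X) where
  mul f g := g.trans f
  one := Homeomorph.refl X
  inv := Homeomorph.symm
  mul_assoc a b c := Homeomorph.ext fun _ => rfl
  one_mul a := Homeomorph.ext fun _ => rfl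
  mul_one a := Homeomorph.ext fun _ => rfl
  inv_mul_cancel a := Homeomorph.ext fun x => a.symm_apply_apply x

/-- `F` is a lift of the circle homeomorphism `f` through the projection `ℝ → ℝ/ℤ`. -/
def IsLift (f : S¹ ≃ₜ S¹) (F : CircleDeg1Lift) : Prop :=
  ∀ x : ℝ, f (x : S¹) = ((F x : ℝ) : S¹)

/-- A circle homeomorphism is orientation-preserving iff it admits a monotone degree-one
lift to the real line. -/
def OrientationPreserving (f : S¹ ≃ₜ S¹) : Prop := ∃ F : CircleDeg1Lift, IsLift f F

open Classical in
/-- Poincaré's rotation number of a circle homeomorphism, as an element of `ℝ/ℤ`;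
the translation number of any lift, reduced mod 1. -/
noncomputable def rot (f : S¹ ≃ₜ S¹) : S¹ :=
  if h : OrientationPreserving f then ((h.choose.translationNumber : ℝ) : S¹) else 0

/-- The fixed-point set of a circle homeomorphism. -/
def FixSet (f : S¹ ≃ₜ S¹) : Set S¹ := {s | f s = s}

/-- A subgroup has a non-abelian free subgroup iff the free group of rank 2 embeds into it. -/
def HasFreeSubgroup {Γ : Type*} [Group Γ] (G : Subgroup Γ) : Prop :=
  ∃ φ : FreeGroup (Fin 2) →* Γ, Function.Injective φ ∧ ∀ w, φ w ∈ G

/-!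
An orientation-preserving circle homeomorphism `a` with a fixed point has north–south dynamics:
lifted to `ℝ`, every orbit in a gap of the fixed set converges monotonically to an endpoint of the
gap, and by compactness high powers of `a` and of `a⁻¹` push the complement of any neighbourhood of
`Fix a` into it. Since `rot f = rot g = p/q`, both `f^q` and `g^q` have fixed points; if they had
no common one, high powers of them would play ping-pong on disjoint neighbourhoods of their fixed
sets and generate a free group. At a common fixed point `s`, lifts `F` and `B` of `f` and `g` with
the same translation number satisfy `F^q ŝ = ŝ + p = B^q ŝ`; were `f g⁻¹` fixed-point free, `F - B`
would have constant sign, hence so would `F^q - B^q`.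
-/

open Filter Topology

section IntermediateValue

variable {α : Type*} [LinearOrder α] [TopologicalSpace α] [OrderClosedTopology α]

theorem forall_lt_or_forall_lt_of_forall_ne {β : Type*} [TopologicalSpace β] {s : Set β}
    (hs : IsPreconnected s) {f g : β → α} (hf : ContinuousOn f s) (hg : ContinuousOn g s)
    (hne : ∀ x ∈ s, f x ≠ g x) : (∀ x ∈ s, f x < g x) ∨ (∀ x ∈ s, g x < f x) := by
  by_contra! h
  obtain ⟨⟨a, ha, hga⟩, ⟨b, hb, hfb⟩⟩ := h
  obtain ⟨x, hx, hfgx⟩ := hs.intermediate_value₂ hb ha hf hg hfb hga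
  exact hne x hx hfgx

theorem iterate_ne_iterate_of_forall_ne [PreconnectedSpace α] {F B : α → α} (hF : Continuous F)
    (hB : Continuous B) (hFm : Monotone F) (hBm : Monotone B) (hne : ∀ x, F x ≠ B x) {n : ℕ}
    (hn : 0 < n) (x : α) : F^[n] x ≠ B^[n] x := by
  rcases forall_lt_or_forall_lt_of_forall_ne isPreconnected_univ hF.continuousOn hB.continuousOn
    fun y _ => hne y with hlt | hlt
  · exact (hBm.seq_pos_lt_seq_of_lt_of_le (x := fun k => F^[k] x) (y := fun k => B^[k] x) hn
      le_rfl (fun k _ => by simpa only [iterate_succ_apply'] using hlt _ trivial)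
      fun k _ => by rw [iterate_succ_apply']).ne
  · exact (hFm.seq_pos_lt_seq_of_lt_of_le (x := fun k => B^[k] x) (y := fun k => F^[k] x) hn
      le_rfl (fun k _ => by simpa only [iterate_succ_apply'] using hlt _ trivial)
      fun k _ => by rw [iterate_succ_apply']).ne'

end IntermediateValue

section MonotoneDynamics

variable {α : Type*} [ConditionallyCompleteLinearOrder α] [TopologicalSpace α] [OrderTopology α]
  {L : α → α}

theorem tendsto_iterate_of_lt_map (hc : Continuous L) (hm : Monotone L) {x r : α}
    (hr : L r = r) (hxr : x < r) (hup : ∀ y ∈ Ico x r, y < L y) :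
    Tendsto (fun n => L^[n] x) atTop (𝓝 r) := by
  have hbound : ∀ n, L^[n] x ≤ r := fun n =>
    (hm.iterate n hxr.le).trans_eq (Function.iterate_fixed hr n)
  have hbdd : BddAbove (range fun n => L^[n] x) := ⟨r, forall_mem_range.2 hbound⟩
  have hlim := tendsto_atTop_ciSup (hm.monotone_iterate_of_le_map (hup x ⟨le_rfl, hxr⟩).le) hbdd
  have hsup : ⨆ n, L^[n] x = r := by
    refine le_antisymm (ciSup_le hbound) (not_lt.1 fun hlt => ?_)
    have hfixed := isFixedPt_of_tendsto_iterate hlim hc.continuousAt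
    exact (hup _ ⟨le_ciSup_of_le hbdd 0 le_rfl, hlt⟩).ne' hfixed
  rwa [hsup] at hlim

theorem exists_mem_nhds_eventually_iterate_mem_of_lt_map [DenselyOrdered α] (hc : Continuous L)
    (hm : Monotone L) {l r x : α} (hr : L r = r) (hx : x ∈ Ioo l r)
    (hup : ∀ y ∈ Ioo l r, y < L y) {V : Set α} (hV : V ∈ 𝓝 r) :
    ∃ U ∈ 𝓝 x, ∀ᶠ n in atTop, ∀ y ∈ U, L^[n] y ∈ V := by
  obtain ⟨a, hla, hax⟩ := exists_between hx.1
  obtain ⟨c, hcr, hcV⟩ := exists_Ioc_subset_of_mem_nhds hV ⟨l, hx.1.trans hx.2⟩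
  have hlim := tendsto_iterate_of_lt_map hc hm hr (hax.trans hx.2)
    fun y hy => hup y ⟨hla.trans_le hy.1, hy.2⟩
  refine ⟨Ioo a r, Ioo_mem_nhds hax hx.2, (hlim.eventually (Ioi_mem_nhds hcr)).mono
    fun n hn y hy => hcV ⟨hn.trans_le (hm.iterate n hy.1.le), ?_⟩⟩
  exact (hm.iterate n hy.2.le).trans_eq (Function.iterate_fixed hr n)

theorem exists_mem_nhds_eventually_iterate_mem [DenselyOrdered α] (hc : Continuous L)
    (hm : Monotone L) {l r x : α} (hl : L l = l) (hr : L r = r) (hx : x ∈ Ioo l r)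
    (hfix : ∀ y ∈ Ioo l r, L y ≠ y) {V : Set α} (hlV : V ∈ 𝓝 l) (hrV : V ∈ 𝓝 r) :
    ∃ U ∈ 𝓝 x, ∀ᶠ n in atTop, ∀ y ∈ U, L^[n] y ∈ V := by
  rcases forall_lt_or_forall_lt_of_forall_ne isPreconnected_Ioo continuous_id.continuousOn
    hc.continuousOn fun y hy => (hfix y hy).symm with hup | hdown
  · exact exists_mem_nhds_eventually_iterate_mem_of_lt_map hc hm hr hx hup hrV
  · exact exists_mem_nhds_eventually_iterate_mem_of_lt_map (α := αᵒᵈ) hc hm.dual hl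
      ⟨hx.2, hx.1⟩ (fun y hy => hdown y ⟨hy.2, hy.1⟩) hlV

theorem IsClosed.exists_Ioo_disjoint {Φ : Set α} (hΦ : IsClosed Φ) {x : α} (hx : x ∉ Φ)
    (hbelow : (Φ ∩ Iic x).Nonempty) (habove : (Φ ∩ Ici x).Nonempty) :
    ∃ l ∈ Φ, ∃ r ∈ Φ, x ∈ Ioo l r ∧ Disjoint (Ioo l r) Φ := by
  have hl := (hΦ.inter isClosed_Iic).csSup_mem hbelow ⟨x, fun _ hy => hy.2⟩
  have hr := (hΦ.inter isClosed_Ici).csInf_mem habove ⟨x, fun _ hy => hy.2⟩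
  refine ⟨_, hl.1, _, hr.1, ⟨hl.2.lt_of_ne fun h => hx (h ▸ hl.1),
    hr.2.lt_of_ne' fun h => hx (h ▸ hr.1)⟩, Set.disjoint_left.2 fun y hy hyΦ => ?_⟩
  rcases le_total y x with hyx | hxy
  · exact (le_csSup (⟨x, fun _ hz => hz.2⟩ : BddAbove (Φ ∩ Iic x)) ⟨hyΦ, hyx⟩).not_gt hy.1
  · exact (csInf_le (⟨x, fun _ hz => hz.2⟩ : BddBelow (Φ ∩ Ici x)) ⟨hyΦ, hxy⟩).not_gt hy.2

end MonotoneDynamics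

theorem AddCircle.coe_eq_coe_iff_exists_int {x y : ℝ} :
    (x : S¹) = (y : S¹) ↔ ∃ k : ℤ, x = y + k := by
  rw [← sub_eq_zero, ← AddCircle.coe_sub, AddCircle.coe_eq_zero_iff]
  simp only [zsmul_eq_mul, mul_one, eq_sub_iff_add_eq, eq_comm (a := x), add_comm]

theorem AddCircle.coe_add_int (x : ℝ) (k : ℤ) : ((x + k : ℝ) : S¹) = (x : S¹) :=
  AddCircle.coe_eq_coe_iff_exists_int.2 ⟨k, rfl⟩

theorem CircleDeg1Lift.eventually_forall_iterate_mem (L : CircleDeg1Lift) (hc : Continuous L)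
    {x₀ : ℝ} (hx₀ : L x₀ = x₀) {U : Set S¹} (hU : IsOpen U)
    (hfixU : ∀ x, L x = x → (x : S¹) ∈ U) :
    ∀ᶠ n in atTop, ∀ x : ℝ, (x : S¹) ∉ U → ((L^[n] x : ℝ) : S¹) ∈ U := by
  set V : Set ℝ := (↑) ⁻¹' U
  have hV : IsOpen V := hU.preimage (AddCircle.continuous_mk' 1)
  have hfixed : ∀ k : ℤ, L (x₀ + k) = x₀ + k := by simp [L.map_add_int, hx₀]
  have hlocal : ∀ x ∉ V, ∃ W ∈ 𝓝 x, ∀ᶠ n in atTop, ∀ y ∈ W, L^[n] y ∈ V := by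
    intro x hx
    obtain ⟨l, hl, r, hr, hxlr, hdisj⟩ := (isClosed_eq hc continuous_id).exists_Ioo_disjoint
      (x := x) (fun h => hx (hfixU x h))
      ⟨x₀ + ⌊x - x₀⌋, hfixed _, mem_Iic.2 (by linarith [Int.floor_le (x - x₀)])⟩
      ⟨x₀ + ⌈x - x₀⌉, hfixed _, mem_Ici.2 (by linarith [Int.le_ceil (x - x₀)])⟩
    exact exists_mem_nhds_eventually_iterate_mem hc L.monotone hl hr hxlr
      (fun y hy hfy => disjoint_left.1 hdisj hy hfy) (hV.mem_nhds (hfixU l hl))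
      (hV.mem_nhds (hfixU r hr))
  have hK : ∀ᶠ n in atTop, ∀ y ∈ Icc (0 : ℝ) 1 \ V, L^[n] y ∈ V := by
    refine (isCompact_Icc.diff hV).induction_on (p := fun s => ∀ᶠ n in atTop, ∀ y ∈ s, L^[n] y ∈ V)
      (by simp) (fun s t hst ht => ht.mono fun n hn y hy => hn y (hst hy))
      (fun s t hs ht => (hs.and ht).mono fun n hn y hy => hy.elim (hn.1 y) (hn.2 y)) ?_
    intro x hx
    obtain ⟨W, hW, hWV⟩ := hlocal x hx.2
    exact ⟨W, mem_nhdsWithin_of_mem_nhds hW, hWV⟩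
  refine hK.mono fun n hn x hx => ?_
  have hfract : ((Int.fract x : ℝ) : S¹) = x := by
    rw [← AddCircle.coe_add_int _ ⌊x⌋, Int.fract_add_floor]
  rw [← Int.fract_add_floor x, ← coe_pow, map_add_int, AddCircle.coe_add_int, coe_pow]
  exact hn _ ⟨⟨Int.fract_nonneg x, (Int.fract_lt_one x).le⟩, by simpa [V, hfract] using hx⟩

theorem IsLift.pow {f : S¹ ≃ₜ S¹} {F : CircleDeg1Lift} (h : IsLift f F) (n : ℕ) :
    IsLift (f ^ n) (F ^ n) := by
  induction n with
  | zero => exact fun x => rfl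
  | succ n ih => exact fun x => by rw [pow_succ, pow_succ, CircleDeg1Lift.mul_apply, ← ih, ← h]; rfl

theorem IsLift.surjective {f : S¹ ≃ₜ S¹} {F : CircleDeg1Lift} (h : IsLift f F) :
    Surjective F := by
  intro y
  obtain ⟨x, hx⟩ := QuotientAddGroup.mk_surjective (f.symm y)
  obtain ⟨k, hk⟩ := AddCircle.coe_eq_coe_iff_exists_int.1
    ((h x).symm.trans (by rw [hx, Homeomorph.apply_symm_apply]) : ((F x : ℝ) : S¹) = y)
  exact ⟨x - k, by rw [F.map_sub_int, hk, add_sub_cancel_right]⟩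

theorem IsLift.continuous {f : S¹ ≃ₜ S¹} {F : CircleDeg1Lift} (h : IsLift f F) :
    Continuous F :=
  F.continuous_iff_surjective.2 h.surjective

theorem IsLift.int_add {f : S¹ ≃ₜ S¹} {F : CircleDeg1Lift} (h : IsLift f F) (k : ℤ) :
    IsLift f (CircleDeg1Lift.translate (Multiplicative.ofAdd (k : ℝ)) * F) := fun x => by
  rw [CircleDeg1Lift.mul_apply, CircleDeg1Lift.translate_apply, add_comm, AddCircle.coe_add_int]
  exact h x

theorem OrientationPreserving.eventually_mapsTo {a : S¹ ≃ₜ S¹} (ha : OrientationPreserving a)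
    (hfix : (FixSet a).Nonempty) {U : Set S¹} (hU : IsOpen U) (hFU : FixSet a ⊆ U) :
    ∀ᶠ n : ℕ in atTop, MapsTo (a ^ n) Uᶜ U := by
  obtain ⟨A, hA⟩ := ha
  obtain ⟨s, hs⟩ := hfix
  obtain ⟨x₀, rfl⟩ := QuotientAddGroup.mk_surjective s
  obtain ⟨m, hm⟩ := AddCircle.coe_eq_coe_iff_exists_int.1 ((hA x₀).symm.trans hs)
  have hL := hA.int_add (-m)
  have hx₀ : (CircleDeg1Lift.translate (Multiplicative.ofAdd ((-m : ℤ) : ℝ)) * A) x₀ = x₀ := by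
    rw [CircleDeg1Lift.mul_apply, CircleDeg1Lift.translate_apply, hm]; push_cast; ring
  refine ((CircleDeg1Lift.eventually_forall_iterate_mem _ hL.continuous hx₀ hU fun x hx =>
    hFU (show a x = x by rw [hL x, hx])).mono fun n hn s hs => ?_)
  obtain ⟨x, rfl⟩ := QuotientAddGroup.mk_surjective s
  rw [hL.pow n x, CircleDeg1Lift.coe_pow]
  exact hn x hs

section PingPong

open Pointwise

variable {Γ α : Type*} [Group Γ] [MulAction Γ α]

theorem FreeGroup.injective_lift_pair_of_ping_pong {a b : Γ} {X Y : Set α} (hX : X.Nonempty)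
    (hY : Y.Nonempty) (hXY : Disjoint X Y) (ha : ∀ n : ℤ, n ≠ 0 → a ^ n • Y ⊆ X)
    (hb : ∀ n : ℤ, n ≠ 0 → b ^ n • X ⊆ Y) : Injective (FreeGroup.lift ![a, b]) := by
  have hcoprod : FreeGroup.lift ![a, b] =
      (Monoid.CoprodI.lift fun i => FreeGroup.lift fun _ : Unit => ![a, b] i).comp
        freeGroupEquivCoprodI.toMonoidHom := by
    ext i; simp
  rw [hcoprod, MonoidHom.coe_comp]
  refine Injective.comp ?_ freeGroupEquivCoprodI.injective
  refine Monoid.CoprodI.lift_injective_of_ping_pong _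
    (Or.inr ⟨0, le_trans (by exact_mod_cast (Cardinal.natCast_lt_aleph0 (n := 3)).le)
      (Cardinal.aleph0_le_mk (FreeGroup Unit))⟩) ![X, Y] (fun i => by fin_cases i <;> assumption)
    (fun i j hij => by
      fin_cases i <;> fin_cases j
      exacts [absurd rfl hij, hXY, hXY.symm, absurd rfl hij]) fun i j hij => ?_
  refine FreeGroup.freeGroupUnitEquivInt.forall_congr_left.2 fun n hn => ?_
  have hn0 : n ≠ 0 := by rintro rfl; simp [FreeGroup.freeGroupUnitEquivInt] at hn
  rw [show FreeGroup.freeGroupUnitEquivInt.symm n = FreeGroup.of () ^ n from rfl, map_zpow,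
    FreeGroup.lift_apply_of]
  fin_cases i <;> fin_cases j <;> simp_all

theorem zpow_pow_smul_subset {a : Γ} {S T : Set α} {N : ℕ}
    (h : ∀ m ≥ N, a ^ m • S ⊆ T ∧ a⁻¹ ^ m • S ⊆ T) {n : ℤ} (hn : n ≠ 0) :
    (a ^ N) ^ n • S ⊆ T := by
  obtain ⟨k, rfl | rfl⟩ := Int.eq_nat_or_neg n
  · rw [zpow_natCast, ← pow_mul]
    exact (h _ (Nat.le_mul_of_pos_right N (by omega))).1
  · rw [zpow_neg, zpow_natCast, ← pow_mul, ← inv_pow]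
    exact (h _ (Nat.le_mul_of_pos_right N (by omega))).2

end PingPong

instance Homeomorph.applyMulAction (X : Type*) [TopologicalSpace X] : MulAction (X ≃ₜ X) X where
  smul f x := f x
  one_smul _ := rfl
  mul_smul _ _ _ := rfl

theorem fixSet_inv (f : S¹ ≃ₜ S¹) : FixSet f⁻¹ = FixSet f :=
  Set.ext fun _ => f.symm_apply_eq.trans eq_comm

theorem isClosed_fixSet (f : S¹ ≃ₜ S¹) : IsClosed (FixSet f) :=
  isClosed_eq f.continuous continuous_id

open Pointwise in
theorem eventually_pow_smul_subset {a : S¹ ≃ₜ S¹} (ha : OrientationPreserving a)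
    (ha' : OrientationPreserving a⁻¹) (hfix : (FixSet a).Nonempty) {U W : Set S¹}
    (hU : IsOpen U) (hFU : FixSet a ⊆ U) (hWU : Disjoint W U) :
    ∀ᶠ m : ℕ in atTop, a ^ m • W ⊆ U ∧ a⁻¹ ^ m • W ⊆ U := by
  refine ((ha.eventually_mapsTo hfix hU hFU).and (ha'.eventually_mapsTo (by rwa [fixSet_inv]) hU
    (by rwa [fixSet_inv]))).mono fun m hm => ?_
  exact ⟨smul_set_subset_iff.2 fun s hs => hm.1 (hWU.subset_compl_right hs),
    smul_set_subset_iff.2 fun s hs => hm.2 (hWU.subset_compl_right hs)⟩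

theorem exists_mem_fixSet_inter (G : Subgroup (S¹ ≃ₜ S¹))
    (hG : ∀ g ∈ G, OrientationPreserving g) (hfree : ¬ HasFreeSubgroup G) {a b : S¹ ≃ₜ S¹}
    (ha : a ∈ G) (hb : b ∈ G) (hfa : (FixSet a).Nonempty) (hfb : (FixSet b).Nonempty) :
    (FixSet a ∩ FixSet b).Nonempty := by
  by_contra h
  obtain ⟨U, W, hU, hW, haU, hbW, hUW⟩ := normal_separation (isClosed_fixSet a)
    (isClosed_fixSet b) (disjoint_iff_inter_eq_empty.2 (not_nonempty_iff_eq_empty.1 h))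
  obtain ⟨N, hN⟩ := eventually_atTop.1
    ((eventually_pow_smul_subset (hG a ha) (hG _ (inv_mem ha)) hfa hU haU hUW.symm).and
      (eventually_pow_smul_subset (hG b hb) (hG _ (inv_mem hb)) hfb hW hbW hUW))
  refine hfree ⟨FreeGroup.lift ![a ^ N, b ^ N],
    FreeGroup.injective_lift_pair_of_ping_pong (hfa.mono haU) (hfb.mono hbW) hUW
      (fun n hn => zpow_pow_smul_subset (fun m hm => (hN m hm).1) hn)
      (fun n hn => zpow_pow_smul_subset (fun m hm => (hN m hm).2) hn),
    fun w => FreeGroup.range_lift_le ?_ ⟨w, rfl⟩⟩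
  rintro _ ⟨i, rfl⟩
  fin_cases i
  exacts [pow_mem ha N, pow_mem hb N]

theorem OrientationPreserving.exists_lift_rot_eq {f : S¹ ≃ₜ S¹} (hf : OrientationPreserving f) :
    ∃ F, IsLift f F ∧ rot f = (F.translationNumber : S¹) :=
  ⟨hf.choose, hf.choose_spec, by rw [rot, dif_pos hf]⟩

theorem IsLift.exists_lift_translationNumber_eq {g : S¹ ≃ₜ S¹} {Gl : CircleDeg1Lift}
    (h : IsLift g Gl) {t : ℝ} (ht : (Gl.translationNumber : S¹) = (t : S¹)) :
    ∃ B, IsLift g B ∧ B.translationNumber = t := by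
  obtain ⟨k, rfl⟩ := AddCircle.coe_eq_coe_iff_exists_int.1 ht.symm
  refine ⟨_, h.int_add k, ?_⟩
  rw [CircleDeg1Lift.translationNumber_mul_of_commute, CircleDeg1Lift.translationNumber_translate,
    add_comm]
  exact CircleDeg1Lift.commute_iff_commute.2 fun x => by
    simp only [CircleDeg1Lift.translate_apply, CircleDeg1Lift.map_int_add]

theorem exists_int_eq_div_den {x : ℝ} {r : ℚ} (h : (x : S¹) = ((r : ℝ) : S¹)) :
    ∃ m : ℤ, x = m / r.den := by
  obtain ⟨k, rfl⟩ := AddCircle.coe_eq_coe_iff_exists_int.1 h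
  refine ⟨r.num + k * r.den, ?_⟩
  rw [Rat.cast_def]
  push_cast
  field_simp

theorem IsLift.fixSet_pow_nonempty {f : S¹ ≃ₜ S¹} {F : CircleDeg1Lift} (h : IsLift f F) {m : ℤ}
    {q : ℕ} (hq : 0 < q) (hτ : F.translationNumber = m / q) : (FixSet (f ^ q)).Nonempty := by
  obtain ⟨x, hx⟩ := (F.translationNumber_eq_rat_iff h.continuous hq).1 hτ
  exact ⟨x, show (f ^ q) x = x by rw [h.pow q x, hx, AddCircle.coe_add_int]⟩

theorem IsLift.pow_apply_eq_add {f : S¹ ≃ₜ S¹} {F : CircleDeg1Lift} (h : IsLift f F) {q : ℕ}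
    (hq : 0 < q) {x : ℝ} (hx : (f ^ q) x = x) : (F ^ q) x = x + F.translationNumber * q := by
  obtain ⟨m, hm⟩ := AddCircle.coe_eq_coe_iff_exists_int.1 ((h.pow q x).symm.trans hx)
  rw [hm, F.translationNumber_of_map_pow_eq_add_int hm hq, div_mul_cancel₀]
  exact_mod_cast hq.ne'

theorem IsLift.fixSet_mul_inv_nonempty {f g : S¹ ≃ₜ S¹} {F B : CircleDeg1Lift} (hF : IsLift f F)
    (hB : IsLift g B) {x : ℝ} (hx : F x = B x) : (FixSet (f * g⁻¹)).Nonempty :=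
  ⟨g x, show f (g.symm (g x)) = g x by rw [g.symm_apply_apply, hF, hB, hx]⟩

/-- In a group without non-abelian free subgroups, two elements with the same rational rotation
number differ by an element with a fixed point. -/
theorem stmt8 (G : Subgroup (S¹ ≃ₜ S¹)) (hG : ∀ g ∈ G, OrientationPreserving g)
    (hfree : ¬ HasFreeSubgroup G) (f g : S¹ ≃ₜ S¹) (hf : f ∈ G) (hg : g ∈ G)
    (r : ℚ) (hrf : rot f = ((r : ℝ) : S¹)) (hrg : rot g = ((r : ℝ) : S¹)) :
    (FixSet (f * g⁻¹)).Nonempty := by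
  obtain ⟨F, hF, hrotF⟩ := (hG f hf).exists_lift_rot_eq
  obtain ⟨Gl, hGl, hrotG⟩ := (hG g hg).exists_lift_rot_eq
  obtain ⟨B, hB, hτB⟩ := hGl.exists_lift_translationNumber_eq
    (hrotG.symm.trans (hrg.trans (hrf.symm.trans hrotF)))
  obtain ⟨m, hm⟩ := exists_int_eq_div_den (hrotF.symm.trans hrf)
  obtain ⟨s, hsf, hsg⟩ := exists_mem_fixSet_inter G hG hfree (pow_mem hf _) (pow_mem hg _)
    (hF.fixSet_pow_nonempty r.den_pos hm) (hB.fixSet_pow_nonempty r.den_pos (hτB.trans hm))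
  obtain ⟨x, rfl⟩ := QuotientAddGroup.mk_surjective s
  by_contra hempty
  refine iterate_ne_iterate_of_forall_ne hF.continuous hB.continuous F.monotone B.monotone
    (fun y hy => hempty (hF.fixSet_mul_inv_nonempty hB hy)) r.den_pos x ?_
  rw [← CircleDeg1Lift.coe_pow, ← CircleDeg1Lift.coe_pow, hF.pow_apply_eq_add r.den_pos hsf,
    hB.pow_apply_eq_add r.den_pos hsg, hτB]
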